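/- Let G_w be a weighted graph containing two pendant vertices u and v that have the same (unique) neighbor, i.e., u and v form a pendant twin. Then i_+(G_w) = i_+(G_w − v) = i_+(G_w − u) and i_-(G_w) = i_-(G_w − v) = i_-(G_w − u), where G_w − v denotes the weighted graph induced on the vertices other than v. -/

import Mathlib

open Matrix

/-- The positive inertia index of a matrix: the number of positive eigenvalues
(counted with multiplicity) if the matrix is Hermitian, and `0` otherwise. -/
noncomputable def posInertia {k 𝕜 : Type*} [RCLike 𝕜] [Fintype k] [DecidableEq k]
    (A : Matrix k k 𝕜) : ℕ :=
  if h : A.IsHermitian then Fintype.card {i // 0 < h.eigenvalues i} else 0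

/-- The negative inertia index of a matrix. -/
noncomputable def negInertia {k 𝕜 : Type*} [RCLike 𝕜] [Fintype k] [DecidableEq k]
    (A : Matrix k k 𝕜) : ℕ :=
  if h : A.IsHermitian then Fintype.card {i // h.eigenvalues i < 0} else 0

/-- The nullity of a matrix: the number of zero eigenvalues. -/
noncomputable def nulInertia {k 𝕜 : Type*} [RCLike 𝕜] [Fintype k] [DecidableEq k]
    (A : Matrix k k 𝕜) : ℕ :=
  if h : A.IsHermitian then Fintype.card {i // h.eigenvalues i = 0} else 0

/-- A weighted graph: a simple graph together with a symmetric weight function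
which is positive on all edges. -/
structure WeightedGraph (V : Type*) where
  G : SimpleGraph V
  w : V → V → ℝ
  symm : ∀ u v : V, w u v = w v u
  pos : ∀ u v : V, G.Adj u v → 0 < w u v

open Classical in
/-- The (weighted) adjacency matrix of a weighted graph. -/
noncomputable def WeightedGraph.adjMatrix {V : Type*} [Fintype V] [DecidableEq V]
    (W : WeightedGraph V) : Matrix V V ℝ :=
  fun a b => if W.G.Adj a b then W.w a b else 0

/-- `i₊`, the number of positive eigenvalues of the adjacency matrix. -/
noncomputable def WeightedGraph.iPos {V : Type*} [Fintype V] [DecidableEq V]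
    (W : WeightedGraph V) : ℕ := posInertia W.adjMatrix

/-- `i₋`, the number of negative eigenvalues of the adjacency matrix. -/
noncomputable def WeightedGraph.iNeg {V : Type*} [Fintype V] [DecidableEq V]
    (W : WeightedGraph V) : ℕ := negInertia W.adjMatrix

/-- `i₀`, the number of zero eigenvalues of the adjacency matrix. -/
noncomputable def WeightedGraph.iNul {V : Type*} [Fintype V] [DecidableEq V]
    (W : WeightedGraph V) : ℕ := nulInertia W.adjMatrix

/-- A weighted graph is bicyclic if its underlying graph is connected and has
exactly one more edge than vertices. -/
def WeightedGraph.IsBicyclic {V : Type*} [Fintype V] (W : WeightedGraph V) : Prop :=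
  W.G.Connected ∧ W.G.edgeSet.ncard = Fintype.card V + 1

/-- The graph has a pendant vertex (a vertex of degree one). -/
def WeightedGraph.HasPendant {V : Type*} (W : WeightedGraph V) : Prop :=
  ∃ x : V, (W.G.neighborSet x).ncard = 1

/-- The graph has no pendant vertices. -/
def WeightedGraph.NoPendant {V : Type*} (W : WeightedGraph V) : Prop :=
  ∀ x : V, (W.G.neighborSet x).ncard ≠ 1

/-- The base of `G` is (isomorphic to) `H`: some induced subgraph of `G` is
isomorphic to `H`.  (For a bicyclic graph `G` and a bicyclic graph `H` without
pendant vertices this induced subgraph is necessarily the unique base of `G`.) -/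
def BaseIsoTo {V B : Type*} (G : SimpleGraph V) (H : SimpleGraph B) : Prop :=
  ∃ S : Set V, Nonempty ((G.induce S) ≃g H)

/-- Vertex labels of the connecting path of `∞(p,l,q)`: the path starts at the
vertex `0` of the first cycle `0, 1, …, p-1`, and its further vertices are
`p, p+1, …`. -/
def pathVert (p j : ℕ) : ℕ := if j = 0 then 0 else p - 1 + j

/-- Vertex labels of the second cycle of `∞(p,l,q)`: it starts at the last
vertex of the connecting path and continues with `p+l-1, p+l, …`. -/
def infCyc2Vert (p l k : ℕ) : ℕ := if k = 0 then pathVert p (l - 1) else p + l - 2 + k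

/-- The edge relation of `∞(p,l,q)` on the vertex labels `0, …, p+q+l-3`:
the first cycle on `0, …, p-1`, the connecting path (on `l` vertices) from the
vertex `0`, and the second cycle attached at the last path vertex. -/
def infinityRel (p l q a b : ℕ) : Prop :=
  (a + 1 < p ∧ b = a + 1) ∨ (a = 0 ∧ b = p - 1) ∨
  (∃ j, j + 1 < l ∧ a = pathVert p j ∧ b = pathVert p (j + 1)) ∨
  (∃ k, k + 1 < q ∧ a = infCyc2Vert p l k ∧ b = infCyc2Vert p l (k + 1)) ∨
  (a = infCyc2Vert p l 0 ∧ b = infCyc2Vert p l (q - 1))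

/-- The graph `∞(p,l,q)`: two vertex-disjoint cycles of lengths `p` and `q`
joined by a path on `l` vertices (whose endpoints are identified with one
vertex on each cycle).  It has `p + q + l - 2` vertices. -/
def infinityGraph (p l q : ℕ) : SimpleGraph (Fin (p + q + l - 2)) :=
  SimpleGraph.fromRel (fun a b => infinityRel p l q a.1 b.1)

/-- The edge relation of one of the three `u,v`-paths of `θ(p,l,q)` having `m`
internal vertices, the internal vertices being labelled `o, o+1, …, o+m-1`
(`u` is the vertex `0` and `v` is the vertex `1`). -/
def thetaPathRel (m o a b : ℕ) : Prop :=
  if m = 0 then a = 0 ∧ b = 1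
  else (a = 0 ∧ b = o) ∨ (∃ i, i + 1 < m ∧ a = o + i ∧ b = o + i + 1) ∨ (a = o + m - 1 ∧ b = 1)

/-- The graph `θ(p,l,q)`: two vertices `u = 0` and `v = 1` joined by three
internally disjoint paths with `p`, `l`, `q` internal vertices respectively.
It has `p + l + q + 2` vertices. -/
def thetaGraph (p l q : ℕ) : SimpleGraph (Fin (p + l + q + 2)) :=
  SimpleGraph.fromRel (fun a b =>
    thetaPathRel p 2 a.1 b.1 ∨ thetaPathRel l (p + 2) a.1 b.1 ∨
      thetaPathRel q (p + l + 2) a.1 b.1)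

/-- The edge set of `G` is exactly the (symmetrized) list `E`. -/
def adjSpec {V : Type*} (G : SimpleGraph V) (E : List (V × V)) : Prop :=
  ∀ a b : V, G.Adj a b ↔ ((a, b) ∈ E ∨ (b, a) ∈ E)

/-- The weighted subgraph induced on a set `S` of vertices. -/
def WeightedGraph.induce {V : Type*} (W : WeightedGraph V) (S : Set V) : WeightedGraph S where
  G := W.G.induce S
  w := fun a b => W.w a b
  symm := fun a b => W.symm a b
  pos := fun a b h => W.pos a b h

/-- The `k`-th vertex (mod `n`) of a cycle on `Fin n`. -/
def cycVert (n : ℕ) (hn : 0 < n) (k : ℕ) : Fin n := ⟨k % n, Nat.mod_lt _ hn⟩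

/-- `W` is the weighted graph `θ(1,1,1)` (i.e. `K_{2,3}`) with parts `{u, v}`
and `{x1, x2, x3}`. -/
def Theta111Shape {V : Type*} (W : WeightedGraph V) (u v x1 x2 x3 : V) : Prop :=
  [u, v, x1, x2, x3].Nodup ∧ (∀ z : V, z ∈ [u, v, x1, x2, x3]) ∧
    adjSpec W.G [(u, x1), (u, x2), (u, x3), (x1, v), (x2, v), (x3, v)]

/-- `W` is the weighted graph `θ(1,0,1)` on vertices `u, v, x1, x2` with edges
`uv, ux1, x1v, ux2, x2v`. -/
def Theta101Shape {V : Type*} (W : WeightedGraph V) (u v x1 x2 : V) : Prop :=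
  [u, v, x1, x2].Nodup ∧ (∀ z : V, z ∈ [u, v, x1, x2]) ∧
    adjSpec W.G [(u, v), (u, x1), (x1, v), (u, x2), (x2, v)]

/-- `W` is the weighted graph `θ(1,0,2)` on vertices `u, v, x, y, z` with edges
`uv, ux, xv, uy, yz, zv`. -/
def Theta102Shape {V : Type*} (W : WeightedGraph V) (u v x y z : V) : Prop :=
  [u, v, x, y, z].Nodup ∧ (∀ t : V, t ∈ [u, v, x, y, z]) ∧
    adjSpec W.G [(u, v), (u, x), (x, v), (u, y), (y, z), (z, v)]

/-- `W` is the weighted graph `θ(2,0,2)` on vertices `u, v, x1, x2, y1, y2`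
with edges `uv, ux1, x1x2, x2v, uy1, y1y2, y2v`. -/
def Theta202Shape {V : Type*} (W : WeightedGraph V) (u v x1 x2 y1 y2 : V) : Prop :=
  [u, v, x1, x2, y1, y2].Nodup ∧ (∀ t : V, t ∈ [u, v, x1, x2, y1, y2]) ∧
    adjSpec W.G [(u, v), (u, x1), (x1, x2), (x2, v), (u, y1), (y1, y2), (y2, v)]

/-- `W` is the weighted graph `θ(1,1,2)` on vertices `u, v, x1, x2, y1, y2`
with edges `ux1, x1v, ux2, x2v, uy1, y1y2, y2v`. -/
def Theta112Shape {V : Type*} (W : WeightedGraph V) (u v x1 x2 y1 y2 : V) : Prop :=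
  [u, v, x1, x2, y1, y2].Nodup ∧ (∀ t : V, t ∈ [u, v, x1, x2, y1, y2]) ∧
    adjSpec W.G [(u, x1), (x1, v), (u, x2), (x2, v), (u, y1), (y1, y2), (y2, v)]

/-- `W` is the weighted graph `∞(3,1,3)`: two triangles sharing the vertex `c`. -/
def Inf313Shape {V : Type*} (W : WeightedGraph V) (c a1 a2 b1 b2 : V) : Prop :=
  [c, a1, a2, b1, b2].Nodup ∧ (∀ t : V, t ∈ [c, a1, a2, b1, b2]) ∧
    adjSpec W.G [(c, a1), (a1, a2), (a2, c), (c, b1), (b1, b2), (b2, c)]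

/-- `W` is the weighted graph `∞(3,2,3)`: the triangle `u,x,y` and the triangle
`v,s,t`, joined by the edge `uv`. -/
def Inf323Shape {V : Type*} (W : WeightedGraph V) (u v x y s t : V) : Prop :=
  [u, v, x, y, s, t].Nodup ∧ (∀ z : V, z ∈ [u, v, x, y, s, t]) ∧
    adjSpec W.G [(u, x), (x, y), (y, u), (v, s), (s, t), (t, v), (u, v)]

/-- `W` is the weighted graph `∞(3,1,4)`: the triangle `c,x,y` and the
quadrilateral `c,z1,z2,z3` sharing the vertex `c`. -/
def Inf314Shape {V : Type*} (W : WeightedGraph V) (c x y z1 z2 z3 : V) : Prop :=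
  [c, x, y, z1, z2, z3].Nodup ∧ (∀ t : V, t ∈ [c, x, y, z1, z2, z3]) ∧
    adjSpec W.G [(c, x), (x, y), (y, c), (c, z1), (z1, z2), (z2, z3), (z3, c)]

/-- `W` is the weighted graph `∞(4,1,4)`: the quadrilaterals `c,x1,x2,x3` and
`c,y1,y2,y3` sharing the vertex `c`. -/
def Inf414Shape {V : Type*} (W : WeightedGraph V) (c x1 x2 x3 y1 y2 y3 : V) : Prop :=
  [c, x1, x2, x3, y1, y2, y3].Nodup ∧ (∀ t : V, t ∈ [c, x1, x2, x3, y1, y2, y3]) ∧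
    adjSpec W.G [(c, x1), (x1, x2), (x2, x3), (x3, c), (c, y1), (y1, y2), (y2, y3), (y3, c)]

/-! The columns of the adjacency matrix `A` at the pendant twins `u`, `v` are `w(u,c) e_c` and
`w(v,c) e_c`, so `d = w(v,c) e_u - w(u,c) e_v` lies in the kernel of `A`. For a symmetric `A`,
adding multiples of a kernel vector does not change the quadratic form `xᵀ A x`; shearing along `d`
to kill the `v`-coordinate and then restricting is therefore an isometry from the form of `G_w`
to the form of `G_w - v`, while extension by zero is an isometry back. By Sylvester's law of
inertia the inertia indices are the maximal dimensions of positive and negative definite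
subspaces, which cannot decrease along an isometry. -/

open Matrix QuadraticMap QuadraticForm Module

section Sylvester

variable {𝕜 M M' : Type*} [Field 𝕜] [LinearOrder 𝕜] [AddCommGroup M] [Module 𝕜 M]
  [FiniteDimensional 𝕜 M] [AddCommGroup M'] [Module 𝕜 M'] [FiniteDimensional 𝕜 M']
  {Q : QuadraticForm 𝕜 M} {Q' : QuadraticForm 𝕜 M'}

theorem QuadraticMap.Isometry.sigPos_le (f : Q →qᵢ Q') : sigPos Q ≤ sigPos Q' := by
  obtain ⟨P, hP, hQP⟩ := exists_finrank_eq_sigPos_and_posDef Q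
  have hinj : Function.Injective (f.toLinearMap.domRestrict P) := by
    rw [← LinearMap.ker_eq_bot, LinearMap.ker_eq_bot']
    intro x hx
    by_contra hx0
    have hpos := hQP x hx0
    rw [restrict_apply, ← f.map_app] at hpos
    simp_all
  have hPf : (Q'.restrict (P.map f.toLinearMap)).PosDef := by
    rintro ⟨_, x, hx, rfl⟩ hx0
    have hxP : (⟨x, hx⟩ : P) ≠ 0 := by rintro ⟨⟩; simp_all
    simpa [restrict_apply, f.map_app] using hQP _ hxP
  calc sigPos Q = finrank 𝕜 (P.map f.toLinearMap) := by
        rw [← hP, ← LinearMap.range_domRestrict, LinearMap.finrank_range_of_inj hinj]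
    _ ≤ sigPos Q' := le_sigPos_of_posDef Q' hPf

theorem QuadraticMap.Isometry.sigNeg_le (f : Q →qᵢ Q') : sigNeg Q ≤ sigNeg Q' :=
  QuadraticMap.Isometry.sigPos_le (Q := -Q) (Q' := -Q') ⟨f.toLinearMap, fun x => by simp⟩

end Sylvester

namespace Matrix.IsHermitian

variable {n : Type*} [Fintype n] [DecidableEq n] {A : Matrix n n ℝ}

noncomputable def eigenbasis (hA : A.IsHermitian) : Basis n ℝ (n → ℝ) :=
  hA.eigenvectorBasis.toBasis.map (WithLp.linearEquiv 2 ℝ (n → ℝ))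

theorem eigenbasis_apply (hA : A.IsHermitian) (i : n) :
    hA.eigenbasis i = ⇑(hA.eigenvectorBasis i) := rfl

theorem eigenbasis_dotProduct_eigenbasis (hA : A.IsHermitian) (i j : n) :
    hA.eigenbasis i ⬝ᵥ hA.eigenbasis j = if i = j then 1 else 0 := by
  have := orthonormal_iff_ite.mp hA.eigenvectorBasis.orthonormal j i
  simpa [eigenbasis_apply, EuclideanSpace.inner_eq_star_dotProduct, eq_comm] using this

theorem eigenbasis_dotProduct_mulVec_eigenbasis (hA : A.IsHermitian) (i j : n) :
    hA.eigenbasis i ⬝ᵥ A *ᵥ hA.eigenbasis j = if i = j then hA.eigenvalues j else 0 := by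
  rw [eigenbasis_apply hA j, mulVec_eigenvectorBasis, dotProduct_smul, ← eigenbasis_apply,
    eigenbasis_dotProduct_eigenbasis]
  simp

theorem equivalent_weightedSumSquares_eigenvalues (hA : A.IsHermitian) :
    Equivalent A.toQuadraticForm' (weightedSumSquares ℝ hA.eigenvalues) := by
  have hortho : (associated (R := ℝ) A.toQuadraticForm').IsOrthoᵢ hA.eigenbasis := by
    intro i j hij
    change associated (R := ℝ) A.toQuadraticForm' (hA.eigenbasis i) (hA.eigenbasis j) = 0
    rw [toQuadraticForm', associated_toQuadraticMap]
    simp [toLinearMap₂'_apply', eigenbasis_dotProduct_mulVec_eigenbasis, hij, Ne.symm hij]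
  have hweights : (fun i => A.toQuadraticForm' (hA.eigenbasis i)) = hA.eigenvalues := by
    ext i
    simp [toQuadraticForm', toLinearMap₂'_apply', eigenbasis_dotProduct_mulVec_eigenbasis]
  refine ⟨(A.toQuadraticForm'.isometryEquivBasisRepr hA.eigenbasis).trans ?_⟩
  rw [basisRepr_eq_of_iIsOrtho _ _ hortho, hweights]
  exact .refl _

theorem posInertia_eq_sigPos (hA : A.IsHermitian) : posInertia A = sigPos A.toQuadraticForm' := by
  rw [sigPos_of_equiv_weightedSumSquares hA.equivalent_weightedSumSquares_eigenvalues,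
    posInertia, dif_pos hA, ← Nat.card_coe_set_eq, Nat.card_eq_fintype_card]
  rfl

theorem negInertia_eq_sigNeg (hA : A.IsHermitian) : negInertia A = sigNeg A.toQuadraticForm' := by
  rw [sigNeg_of_equiv_weightedSumSquares hA.equivalent_weightedSumSquares_eigenvalues,
    negInertia, dif_pos hA, ← Nat.card_coe_set_eq, Nat.card_eq_fintype_card]
  rfl

end Matrix.IsHermitian

theorem Fintype.sum_set_coe_eq_sum_of_eq_zero {ι R : Type*} [Fintype ι] [AddCommMonoid R]
    {S : Set ι} [Fintype S] (f : ι → R) (hf : ∀ i ∉ S, f i = 0) : ∑ i : S, f i = ∑ i, f i := by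
  classical
  rw [Finset.sum_set_coe]
  exact Finset.sum_subset (Finset.subset_univ _) fun i _ hi => hf i (by simpa using hi)

namespace Matrix

variable {V : Type*} [Fintype V] [DecidableEq V]

section CommRing

variable {R : Type*} [CommRing R]

theorem toQuadraticForm'_submatrix_val (A : Matrix V V R) {S : Set V} [Fintype S] (x : V → R)
    (hx : ∀ i ∉ S, x i = 0) :
    (A.submatrix ((↑) : S → V) (↑)).toQuadraticForm' (x ∘ (↑)) = A.toQuadraticForm' x := by
  simp only [toQuadraticForm', LinearMap.BilinMap.toQuadraticMap_apply, toLinearMap₂'_apply',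
    dotProduct, mulVec, Function.comp_apply, submatrix_apply]
  calc ∑ i : S, x i * ∑ j : S, A i j * x j = ∑ i : S, x i * ∑ j, A i j * x j := by
        congr! 2 with i
        exact Fintype.sum_set_coe_eq_sum_of_eq_zero (fun j => A i j * x j) (by simp_all)
    _ = ∑ i, x i * ∑ j, A i j * x j :=
        Fintype.sum_set_coe_eq_sum_of_eq_zero (fun i => x i * ∑ j, A i j * x j) (by simp_all)

noncomputable def extendByZeroIsometry (A : Matrix V V R) (S : Set V) [Fintype S] :
    (A.submatrix ((↑) : S → V) (↑)).toQuadraticForm' →qᵢ A.toQuadraticForm' where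
  toLinearMap := Function.ExtendByZero.linearMap R ((↑) : S → V)
  map_app' y := by
    change A.toQuadraticForm' (Function.extend (↑) y 0) = _
    rw [← toQuadraticForm'_submatrix_val A (Function.extend (↑) y 0)
      fun i hi => Function.extend_apply' _ _ _ (by simpa using hi)]
    exact congrArg _ (funext (Subtype.val_injective.extend_apply y 0))

theorem toQuadraticForm'_add_smul_of_mulVec_eq_zero {A : Matrix V V R} (hA : A.IsSymm)
    {d : V → R} (hd : A *ᵥ d = 0) (x : V → R) (t : R) :
    A.toQuadraticForm' (x + t • d) = A.toQuadraticForm' x := by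
  have hd' : d ᵥ* A = 0 := by rw [← transpose_transpose A, vecMul_transpose, hA.eq, hd]
  simp only [toQuadraticForm', LinearMap.BilinMap.toQuadraticMap_apply, toLinearMap₂'_apply',
    mulVec_add, mulVec_smul, hd, smul_zero, add_zero, add_dotProduct, smul_dotProduct,
    dotProduct_mulVec d, hd', zero_dotProduct]

end CommRing

noncomputable def isometrySubmatrixOfMulVecEqZero {K : Type*} [Field K] {A : Matrix V V K}
    (hA : A.IsSymm) {d : V → K} (hd : A *ᵥ d = 0) {v : V} (hdv : d v ≠ 0) :
    A.toQuadraticForm' →qᵢ (A.submatrix ((↑) : {x | x ≠ v} → V) (↑)).toQuadraticForm' where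
  toLinearMap :=
    LinearMap.funLeft K K (↑) ∘ₗ (LinearMap.id - (d v)⁻¹ • (LinearMap.proj v).smulRight d)
  map_app' x := by
    have hx : (LinearMap.funLeft K K (↑) ∘ₗ
        (LinearMap.id - (d v)⁻¹ • (LinearMap.proj v).smulRight d)) x =
        (x + (-((d v)⁻¹ * x v)) • d) ∘ ((↑) : {x | x ≠ v} → V) := by
      ext i
      simp [sub_eq_add_neg, mul_assoc]
    rw [LinearMap.toFun_eq_coe, hx, toQuadraticForm'_submatrix_val A _ fun i hi => ?_,
      toQuadraticForm'_add_smul_of_mulVec_eq_zero hA hd]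
    obtain rfl : i = v := by simpa using hi
    simp [mul_right_comm _ (x i), hdv]

theorem posInertia_submatrix_ne_of_mulVec_eq_zero {A : Matrix V V ℝ} (hA : A.IsHermitian)
    {d : V → ℝ} (hd : A *ᵥ d = 0) {v : V} (hdv : d v ≠ 0) :
    posInertia (A.submatrix ((↑) : {x | x ≠ v} → V) (↑)) = posInertia A := by
  rw [hA.posInertia_eq_sigPos, (hA.submatrix _).posInertia_eq_sigPos]
  exact le_antisymm (extendByZeroIsometry A _).sigPos_le
    (isometrySubmatrixOfMulVecEqZero (isHermitian_iff_isSymm.mp hA) hd hdv).sigPos_le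

theorem negInertia_submatrix_ne_of_mulVec_eq_zero {A : Matrix V V ℝ} (hA : A.IsHermitian)
    {d : V → ℝ} (hd : A *ᵥ d = 0) {v : V} (hdv : d v ≠ 0) :
    negInertia (A.submatrix ((↑) : {x | x ≠ v} → V) (↑)) = negInertia A := by
  rw [hA.negInertia_eq_sigNeg, (hA.submatrix _).negInertia_eq_sigNeg]
  exact le_antisymm (extendByZeroIsometry A _).sigNeg_le
    (isometrySubmatrixOfMulVecEqZero (isHermitian_iff_isSymm.mp hA) hd hdv).sigNeg_le

end Matrix

namespace WeightedGraph

variable {V : Type*} [Fintype V] [DecidableEq V] (W : WeightedGraph V)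

theorem adjMatrix_isHermitian : W.adjMatrix.IsHermitian := by
  refine isHermitian_iff_isSymm.mpr (IsSymm.ext fun i j => ?_)
  by_cases h : W.G.Adj i j
  · simp [adjMatrix, h, h.symm, W.symm i j]
  · simp [adjMatrix, h, mt W.G.adj_symm h]

theorem adjMatrix_induce (S : Set V) [Fintype S] :
    (W.induce S).adjMatrix = W.adjMatrix.submatrix (↑) (↑) := rfl

theorem iPos_induce_ne_of_adjMatrix_mulVec_eq_zero {d : V → ℝ} (hd : W.adjMatrix *ᵥ d = 0)
    {v : V} (hdv : d v ≠ 0) : (W.induce {x | x ≠ v}).iPos = W.iPos := by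
  rw [iPos, iPos, adjMatrix_induce]
  exact posInertia_submatrix_ne_of_mulVec_eq_zero W.adjMatrix_isHermitian hd hdv

theorem iNeg_induce_ne_of_adjMatrix_mulVec_eq_zero {d : V → ℝ} (hd : W.adjMatrix *ᵥ d = 0)
    {v : V} (hdv : d v ≠ 0) : (W.induce {x | x ≠ v}).iNeg = W.iNeg := by
  rw [iNeg, iNeg, adjMatrix_induce]
  exact negInertia_submatrix_ne_of_mulVec_eq_zero W.adjMatrix_isHermitian hd hdv

theorem adjMatrix_mulVec_single_of_neighborSet_eq {u c : V} (hu : W.G.neighborSet u = {c}) :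
    W.adjMatrix *ᵥ Pi.single u 1 = Pi.single c (W.w u c) := by
  ext i
  have hadj : W.G.Adj i u ↔ i = c := by
    rw [W.G.adj_comm, ← SimpleGraph.mem_neighborSet, hu, Set.mem_singleton_iff]
  by_cases hi : i = c
  · subst hi
    simp [adjMatrix, hadj, W.symm i u]
  · simp [adjMatrix, hadj, hi]

theorem adjMatrix_mulVec_pendantTwin_eq_zero {u v c : V} (hu : W.G.neighborSet u = {c})
    (hv : W.G.neighborSet v = {c}) :
    W.adjMatrix *ᵥ (W.w v c • Pi.single u 1 - W.w u c • Pi.single v 1) = 0 := by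
  rw [mulVec_sub, mulVec_smul, mulVec_smul, W.adjMatrix_mulVec_single_of_neighborSet_eq hu,
    W.adjMatrix_mulVec_single_of_neighborSet_eq hv, ← Pi.single_smul', ← Pi.single_smul',
    smul_eq_mul, smul_eq_mul, mul_comm, sub_self]

end WeightedGraph

/-- deleting one vertex of a pendant twin does not change the
positive and negative inertia indices. -/
theorem stmt18 {V : Type*} [Fintype V] [DecidableEq V] (W : WeightedGraph V)
    (u v c : V) (huv : u ≠ v)
    (hu : W.G.neighborSet u = {c}) (hv : W.G.neighborSet v = {c}) :
    W.iPos = (W.induce {x : V | x ≠ v}).iPos ∧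
    W.iPos = (W.induce {x : V | x ≠ u}).iPos ∧
    W.iNeg = (W.induce {x : V | x ≠ v}).iNeg ∧
    W.iNeg = (W.induce {x : V | x ≠ u}).iNeg := by
  set d : V → ℝ := W.w v c • Pi.single u 1 - W.w u c • Pi.single v 1
  have hd : W.adjMatrix *ᵥ d = 0 := W.adjMatrix_mulVec_pendantTwin_eq_zero hu hv
  have hwu : 0 < W.w u c := W.pos u c (by simp [← SimpleGraph.mem_neighborSet, hu])
  have hwv : 0 < W.w v c := W.pos v c (by simp [← SimpleGraph.mem_neighborSet, hv])
  have hdu : d u ≠ 0 := by simp [d, huv, hwv.ne']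
  have hdv : d v ≠ 0 := by simp [d, huv.symm, hwu.ne']
  exact ⟨(W.iPos_induce_ne_of_adjMatrix_mulVec_eq_zero hd hdv).symm,
    (W.iPos_induce_ne_of_adjMatrix_mulVec_eq_zero hd hdu).symm,
    (W.iNeg_induce_ne_of_adjMatrix_mulVec_eq_zero hd hdv).symm,
    (W.iNeg_induce_ne_of_adjMatrix_mulVec_eq_zero hd hdu).symm⟩
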